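/- arXiv:0810.1010 — 2 statements merged into one kernel-verified Lean document; each statement's English description precedes it below -/
import Mathlib

section
/- For a fixed pair $(a_1,a_2) \in (\mathbb{Z}/2\mathbb{Z})^g \times (\mathbb{Z}/2\mathbb{Z})^g$, one has $\sum_{(b_1,b_2)\,:\,b_1\cdot b_2=0} (-1)^{a_1\cdot b_2 + a_2\cdot b_1} = 2^{g-1}(2^g+1)$ if $a_1 = a_2 = 0$, and $= (-1)^{a_1\cdot a_2}\,2^{g-1}$ otherwise, where the sum is over all pairs $(b_1,b_2) \in (\mathbb{Z}/2\mathbb{Z})^g \times (\mathbb{Z}/2\mathbb{Z})^g$ with $b_1 \cdot b_2 = 0$. -/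
open Finset

def dot {g : ℕ} (a b : Fin g → ZMod 2) : ZMod 2 := ∑ i, a i * b i

def sgn (x : ZMod 2) : ℚ := (-1 : ℚ) ^ x.val

lemma zmod_two_cases : ∀ x : ZMod 2, x = 0 ∨ x = 1 := by decide

lemma sgn_zero : sgn 0 = 1 := by norm_num [sgn]

lemma sgn_one : sgn 1 = -1 := by
  have : (1 : ZMod 2).val = 1 := rfl
  rw [sgn, this]; norm_num

lemma sgn_add (x y : ZMod 2) : sgn (x + y) = sgn x * sgn y := by
  rcases zmod_two_cases x with hx | hx <;> rcases zmod_two_cases y with hy | hy <;>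
    subst hx <;> subst hy <;> norm_num [sgn_zero, sgn_one] <;>
    · show sgn 0 = _; norm_num [sgn_zero]

lemma sgn_sum {ι : Type*} (s : Finset ι) (f : ι → ZMod 2) :
    sgn (∑ i ∈ s, f i) = ∏ i ∈ s, sgn (f i) := by
  induction s using Finset.cons_induction with
  | empty => simp [sgn_zero]
  | cons a s ha ih => rw [Finset.sum_cons, Finset.prod_cons, sgn_add, ih]

lemma charSum {g : ℕ} (a : Fin g → ZMod 2) :
    ∑ b : Fin g → ZMod 2, sgn (dot a b) = if a = 0 then (2:ℚ)^g else 0 := by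
  have h1 : ∀ b, sgn (dot a b) = ∏ i, sgn (a i * b i) := fun b => sgn_sum _ _
  simp only [h1]
  rw [← Fintype.piFinset_univ, ← Finset.prod_univ_sum (t := fun _ : Fin g => (Finset.univ : Finset (ZMod 2))) (f := fun i y => sgn (a i * y))]
  have h2 : ∀ i : Fin g, ∑ x : ZMod 2, sgn (a i * x) = if a i = 0 then 2 else 0 := by
    intro i
    have huniv : (Finset.univ : Finset (ZMod 2)) = {0, 1} := by decide
    rw [huniv, Finset.sum_insert (by decide), Finset.sum_singleton]
    rcases zmod_two_cases (a i) with h | h <;>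
      simp [h, sgn_zero, sgn_one] <;> norm_num
  simp only [h2]
  by_cases h : a = 0
  · simp [h, funext_iff.mp h]
  · obtain ⟨i, hi⟩ := Function.ne_iff.mp h
    simp only [Pi.zero_apply] at hi
    rw [if_neg h]
    exact Finset.prod_eq_zero (Finset.mem_univ i) (by simp [hi])

theorem stmt_1 (g : ℕ) (hg : 1 ≤ g) (a1 a2 : Fin g → ZMod 2) :
    ∑ b ∈ Finset.univ.filter
        (fun b : (Fin g → ZMod 2) × (Fin g → ZMod 2) => dot b.1 b.2 = 0),
        sgn (dot a1 b.2 + dot a2 b.1)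
      = if a1 = 0 ∧ a2 = 0 then (2 : ℚ) ^ (g - 1) * (2 ^ g + 1)
        else sgn (dot a1 a2) * 2 ^ (g - 1) := by
  have dot_comm : ∀ (u v : Fin g → ZMod 2), dot u v = dot v u := by
    intro u v; unfold dot; exact Finset.sum_congr rfl (fun i _ => mul_comm _ _)
  have dot_add_left : ∀ (u v w : Fin g → ZMod 2), dot (u + v) w = dot u w + dot v w := by
    intro u v w; unfold dot
    rw [← Finset.sum_add_distrib]
    exact Finset.sum_congr rfl (fun i _ => by simp [add_mul])
  rw [Finset.sum_filter]
  have step : ∀ b : (Fin g → ZMod 2) × (Fin g → ZMod 2),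
      (if dot b.1 b.2 = 0 then sgn (dot a1 b.2 + dot a2 b.1) else 0)
      = sgn (dot a1 b.2 + dot a2 b.1) / 2
        + sgn (dot a1 b.2 + dot a2 b.1) * sgn (dot b.1 b.2) / 2 := by
    intro b
    rcases zmod_two_cases (dot b.1 b.2) with h | h <;> rw [h]
    · rw [if_pos rfl, sgn_zero]; ring
    · rw [if_neg (by decide), sgn_one]; ring
  simp only [step]
  rw [Finset.sum_add_distrib]
  have T1 : ∑ b : (Fin g → ZMod 2) × (Fin g → ZMod 2),
      sgn (dot a1 b.2 + dot a2 b.1) / 2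
      = (if a1 = 0 then (2:ℚ)^g else 0) * (if a2 = 0 then (2:ℚ)^g else 0) / 2 := by
    rw [← Finset.sum_div]
    congr 1
    rw [Fintype.sum_prod_type]
    simp only [sgn_add]
    have hc : ∀ x y : Fin g → ZMod 2,
        sgn (dot a1 y) * sgn (dot a2 x) = sgn (dot a2 x) * sgn (dot a1 y) :=
      fun _ _ => mul_comm _ _
    simp only [hc, ← Finset.mul_sum]
    rw [← Finset.sum_mul, charSum a2, charSum a1]
    ring
  have T2 : ∑ b : (Fin g → ZMod 2) × (Fin g → ZMod 2),
      sgn (dot a1 b.2 + dot a2 b.1) * sgn (dot b.1 b.2) / 2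
      = sgn (dot a1 a2) * (2:ℚ)^g / 2 := by
    rw [← Finset.sum_div]
    congr 1
    rw [Fintype.sum_prod_type]
    have inner : ∀ b1 : Fin g → ZMod 2,
        ∑ b2 : Fin g → ZMod 2, sgn (dot a1 b2 + dot a2 b1) * sgn (dot b1 b2)
        = sgn (dot a2 b1) * (if a1 + b1 = 0 then (2:ℚ)^g else 0) := by
      intro b1
      rw [← charSum (a1 + b1), Finset.mul_sum]
      refine Finset.sum_congr rfl (fun b2 _ => ?_)
      rw [dot_add_left, sgn_add, sgn_add, dot_comm b1 b2]
      ring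
    simp only [inner]
    have hcond : ∀ b1 : Fin g → ZMod 2, (a1 + b1 = 0) = (b1 = a1) := by
      intro b1
      have : a1 + b1 = 0 ↔ b1 = a1 := by
        constructor
        · intro h; funext i
          have hh := congrFun h i
          have h2 : ∀ x y : ZMod 2, x + y = 0 → y = x := by decide
          exact h2 _ _ hh
        · intro h; rw [h]; funext i
          simp [CharTwo.add_self_eq_zero]
      exact propext this
    simp only [hcond]
    simp only [mul_ite, mul_zero]
    rw [Finset.sum_ite_eq' Finset.univ a1 (fun b1 => sgn (dot a2 b1) * (2:ℚ)^g)]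
    simp [dot_comm a2 a1]
  rw [T1, T2]
  have h2g : (2:ℚ)^g = 2 * 2^(g-1) := by
    rw [← pow_succ']; congr 1; omega
  by_cases h : a1 = 0 ∧ a2 = 0
  · rw [if_pos h, if_pos h.1, if_pos h.2]
    have hd : dot a1 a2 = 0 := by simp [dot, funext_iff.mp h.1]
    rw [hd, sgn_zero, h2g]; ring
  · rw [if_neg h]
    have hz : (if a1 = 0 then (2:ℚ)^g else 0) * (if a2 = 0 then (2:ℚ)^g else 0) = 0 := by
      rcases not_and_or.mp h with h1 | h1 <;> simp [h1]
    rw [hz, h2g]; ring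
end

section
/- Let $M$ be the matrix indexed by even pairs in $(\mathbb{Z}/2\mathbb{Z})^g \times (\mathbb{Z}/2\mathbb{Z})^g$ with entries $(-1)^{a_1\cdot b_2 + a_2\cdot b_1}$, of size $d_+ = 2^{g-1}(2^g+1)$. Then the only possible eigenvalues of $M$ (over $\mathbb{Q}$ or any field of characteristic zero) are $2^g$ and $-2^{g-1}$; equivalently, $(M - 2^g I)(M + 2^{g-1} I) = 0$. -/
open Finset

/-- The type of even pairs in `(ℤ/2ℤ)^g × (ℤ/2ℤ)^g`. -/
def EvenPair (g : ℕ) : Type :=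
  { p : (Fin g → ZMod 2) × (Fin g → ZMod 2) // dot p.1 p.2 = 0 }

instance (g : ℕ) : Fintype (EvenPair g) := by unfold EvenPair; infer_instance
instance (g : ℕ) : DecidableEq (EvenPair g) := by unfold EvenPair; infer_instance

/-- The matrix with entries `(-1)^(a₁·b₂ + a₂·b₁)` indexed by even pairs. -/
def M (g : ℕ) : Matrix (EvenPair g) (EvenPair g) ℚ :=
  fun a b => sgn (dot a.1.1 b.1.2 + dot a.1.2 b.1.1)

lemma zmod2_cases (x : ZMod 2) : x = 0 ∨ x = 1 := by revert x; decide
lemma zmod2_univ : (univ : Finset (ZMod 2)) = {0, 1} := by decide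

lemma zmod2_sum_sgn (c : ZMod 2) : ∑ x : ZMod 2, sgn (c * x) = if c = 0 then 2 else 0 := by
  rw [zmod2_univ, Finset.sum_pair (by decide)]
  rcases zmod2_cases c with hc | hc <;> subst hc <;> norm_num [sgn_zero, sgn_one]

lemma sum_sgn_dot {g : ℕ} (u : Fin g → ZMod 2) :
    ∑ b : Fin g → ZMod 2, sgn (dot u b) = if u = 0 then (2:ℚ)^g else 0 := by
  unfold dot
  simp_rw [sgn_sum]
  rw [← Fintype.piFinset_univ,
    ← Finset.prod_univ_sum (t := fun _ => (univ : Finset (ZMod 2)))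
      (f := fun i y => sgn (u i * y))]
  simp_rw [zmod2_sum_sgn]
  by_cases hu : u = 0
  · simp [hu]
  · obtain ⟨i, hi⟩ := Function.ne_iff.mp hu
    rw [if_neg hu]
    exact Finset.prod_eq_zero (Finset.mem_univ i) (by simpa using hi)

lemma dot_add_left {g : ℕ} (u v b : Fin g → ZMod 2) :
    dot (u + v) b = dot u b + dot v b := by
  unfold dot; simp [add_mul, Finset.sum_add_distrib]

lemma dot_comm {g : ℕ} (u v : Fin g → ZMod 2) : dot u v = dot v u := by
  unfold dot; simp [mul_comm]

lemma pi_add_eq_zero_iff {g : ℕ} (u v : Fin g → ZMod 2) : u + v = 0 ↔ v = u := by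
  constructor
  · intro h
    have h2 := eq_neg_of_add_eq_zero_right h
    rw [h2]; funext i; exact CharTwo.neg_eq _
  · intro h; subst h; funext i
    exact CharTwo.add_self_eq_zero _

lemma two_mul_ite (x : ZMod 2) (c : ℚ) :
    2 * (if x = 0 then c else 0) = c + c * sgn x := by
  rcases zmod2_cases x with hx | hx <;> subst hx <;>
    simp [sgn_zero, sgn_one] <;> ring

lemma S_lemma {g : ℕ} (u v : Fin g → ZMod 2) :
    (2:ℚ) * ∑ b₁ : Fin g → ZMod 2, ∑ b₂ : Fin g → ZMod 2,
        (if dot b₁ b₂ = 0 then sgn (dot u b₂ + dot v b₁) else 0)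
    = (if u = 0 ∧ v = 0 then (2:ℚ)^(2*g) else 0) + (2:ℚ)^g * sgn (dot u v) := by
  rw [Finset.mul_sum]
  simp_rw [Finset.mul_sum, two_mul_ite, Finset.sum_add_distrib]
  have hA : ∑ b₁ : Fin g → ZMod 2, ∑ b₂ : Fin g → ZMod 2, sgn (dot u b₂ + dot v b₁)
      = if u = 0 ∧ v = 0 then (2:ℚ)^(2*g) else 0 := by
    simp_rw [sgn_add]
    rw [Finset.sum_comm]
    simp_rw [← Finset.mul_sum, sum_sgn_dot]
    rw [← Finset.sum_mul, sum_sgn_dot]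
    by_cases hu : u = 0 <;> by_cases hv : v = 0 <;>
      simp [hu, hv, two_mul, pow_add]
  have hB : ∑ b₁ : Fin g → ZMod 2, ∑ b₂ : Fin g → ZMod 2,
        sgn (dot u b₂ + dot v b₁) * sgn (dot b₁ b₂)
      = (2:ℚ)^g * sgn (dot u v) := by
    have step : ∀ b₁ b₂ : Fin g → ZMod 2,
        sgn (dot u b₂ + dot v b₁) * sgn (dot b₁ b₂)
        = sgn (dot v b₁) * sgn (dot (u + b₁) b₂) := by
      intro b₁ b₂
      rw [dot_add_left, sgn_add, sgn_add]
      ring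
    simp_rw [step, ← Finset.mul_sum, sum_sgn_dot, pi_add_eq_zero_iff]
    simp_rw [mul_ite_zero]
    rw [Finset.sum_ite_eq' Finset.univ u (fun b₁ => sgn (dot v b₁) * (2:ℚ)^g)]
    simp [mul_comm, dot_comm u v]
  rw [hA, hB]

set_option maxHeartbeats 800000 in
lemma key_entry {g : ℕ} (a c : EvenPair g) :
    (2:ℚ) * (M g * M g) a c
    = (if a = c then (2:ℚ)^(2*g) else 0) + (2:ℚ)^g * M g a c := by
  have hsub : (M g * M g) a c
      = ∑ p ∈ Finset.univ.filter (fun p : (Fin g → ZMod 2) × (Fin g → ZMod 2) => dot p.1 p.2 = 0),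
          sgn (dot a.1.1 p.2 + dot a.1.2 p.1) * sgn (dot p.1 c.1.2 + dot p.2 c.1.1) := by
    rw [Matrix.mul_apply]
    have h0 : ∀ j : EvenPair g, M g a j * M g j c
        = sgn (dot a.1.1 j.1.2 + dot a.1.2 j.1.1) * sgn (dot j.1.1 c.1.2 + dot j.1.2 c.1.1) :=
      fun j => rfl
    simp_rw [h0]
    exact (Finset.sum_subtype
      (p := fun p : (Fin g → ZMod 2) × (Fin g → ZMod 2) => dot p.1 p.2 = 0)
      (Finset.univ.filter (fun p : (Fin g → ZMod 2) × (Fin g → ZMod 2) => dot p.1 p.2 = 0))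
      (fun x => by simp)
      (fun p => sgn (dot a.1.1 p.2 + dot a.1.2 p.1) * sgn (dot p.1 c.1.2 + dot p.2 c.1.1))).symm
  rw [hsub, Finset.sum_filter, Fintype.sum_prod_type]
  have hrw : ∀ b₁ b₂ : Fin g → ZMod 2,
      sgn (dot a.1.1 b₂ + dot a.1.2 b₁) * sgn (dot b₁ c.1.2 + dot b₂ c.1.1)
      = sgn (dot (a.1.1 + c.1.1) b₂ + dot (a.1.2 + c.1.2) b₁) := by
    intro b₁ b₂
    rw [dot_add_left, dot_add_left]
    simp only [sgn_add]
    rw [dot_comm b₁ c.1.2, dot_comm b₂ c.1.1]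
    ring
  simp_rw [hrw]
  rw [S_lemma]
  congr 1
  · congr 1
    rw [show ((a.1.1 + c.1.1 = 0) ∧ (a.1.2 + c.1.2 = 0)) ↔ a = c by
      rw [pi_add_eq_zero_iff, pi_add_eq_zero_iff]
      constructor
      · rintro ⟨h1, h2⟩
        exact Subtype.ext (Prod.ext h1.symm h2.symm)
      · rintro rfl; exact ⟨rfl, rfl⟩]
  · congr 1
    show sgn (dot (a.1.1 + c.1.1) (a.1.2 + c.1.2)) = sgn (dot a.1.1 c.1.2 + dot a.1.2 c.1.1)
    congr 1
    rw [dot_add_left]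
    rw [dot_comm a.1.1 (a.1.2 + c.1.2), dot_add_left, dot_comm c.1.1 (a.1.2 + c.1.2), dot_add_left]
    have ha : dot a.1.2 a.1.1 = 0 := by rw [dot_comm]; exact a.2
    have hc : dot c.1.2 c.1.1 = 0 := by rw [dot_comm]; exact c.2
    rw [ha, hc, dot_comm a.1.2 c.1.1]
    rw [zero_add, add_zero, dot_comm c.1.2 a.1.1, add_comm]

theorem stmt_6 (g : ℕ) (hg : 1 ≤ g) :
    (M g - ((2 : ℚ) ^ g) • 1) * (M g + ((2 : ℚ) ^ (g - 1)) • 1) = 0 := by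
  have hkey : M g * M g = ((2:ℚ)^(g-1)) • M g + ((2:ℚ)^(2*g-1)) • (1 : Matrix (EvenPair g) (EvenPair g) ℚ) := by
    ext a c
    have h := key_entry a c
    have hpow : (2:ℚ)^g = 2 * (2:ℚ)^(g-1) := by
      rw [← pow_succ']
      congr 1; omega
    have hpow2 : (2:ℚ)^(2*g) = 2 * (2:ℚ)^(2*g-1) := by
      rw [← pow_succ']
      congr 1; omega
    rw [hpow, hpow2] at h
    have h2 : (2:ℚ) * ((M g * M g) a c)
        = 2 * ((2:ℚ)^(g-1) * M g a c + (2:ℚ)^(2*g-1) * (if a = c then 1 else 0)) := by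
      rw [h]; split_ifs <;> ring
    have := mul_left_cancel₀ (two_ne_zero) h2
    simpa [Matrix.add_apply, Matrix.smul_apply, Matrix.one_apply, smul_eq_mul] using this
  have hpow : (2:ℚ)^g = 2 * (2:ℚ)^(g-1) := by
    rw [← pow_succ']; congr 1; omega
  have hpow3 : (2:ℚ)^(g-1) * (2:ℚ)^g = (2:ℚ)^(2*g-1) := by
    rw [← pow_add]; congr 1; omega
  rw [sub_mul, mul_add, mul_add, hkey]
  simp only [Matrix.smul_mul, Matrix.mul_smul, one_mul, mul_one, smul_smul]
  ext a c
  simp only [Matrix.add_apply, Matrix.sub_apply, Matrix.smul_apply, Matrix.zero_apply,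
    smul_eq_mul]
  rw [hpow3, hpow]
  ring
end
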